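/- Let μ₀, λ₀, ω₀, β₀, μ₁, α₁, λ₁ ∈ ℝ with μ₁ > 0 and λ₁ + (2/3)μ₁ > 0. On M₃ define C₁ := 2μ₁·sym₀ + 2α₁·skew + (3λ₁+2μ₁)·ℙ; let Sym ⊆ M₃ be the symmetric matrices with inclusion ι : Sym → M₃, and define C₀ := ι*∘(2μ₀·sym₀ + (3λ₀+2μ₀)·ℙ)∘ι ∈ L(Sym) and G₀ := ι*∘(2ω₀·sym₀ + (3β₀+2ω₀)·ℙ) ∈ L(M₃, Sym). Then the operator on M₃ given by ι∘C₀∘ι* + G₀*∘ι* + ι∘G₀ + C₁ − (ι∘G₀∘ι + C₁∘ι)∘(ι*∘C₁∘ι)⁻¹∘(ι*∘G₀*∘ι* + ι*∘C₁) equals 2·((μ₀μ₁ − ω₀²)/μ₁)·sym₀ + 2α₁·skew + (((3λ₁+2μ₁)(3λ₀+2μ₀) − (3β₀+2ω₀)²)/(3λ₁+2μ₁))·ℙ; consequently it is strictly positive definite if α₁ > 0, μ₀μ₁ − ω₀² > 0 and (3λ₁+2μ₁)(3λ₀+2μ₀) − (3β₀+2ω₀)² > 0. -/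

import Mathlib

/-!
Every operator in the formula is isotropic, `a • sym₀ + b • skew + c • ℙ`. Since `sym₀`, `skew`
and `ℙ` are complementary idempotents, self-adjoint for the Frobenius product, isotropic operators
compose coefficientwise, and `ι ∘ ι* = sym` is the isotropic operator with coefficients `(1, 0, 1)`.
Adjointness forces `G₀* = (2ω₀ • sym₀ + (3β₀ + 2ω₀) • ℙ) ∘ ι` and invertibility forces
`(ι* C₁ ι)⁻¹ = ι* ((2μ₁)⁻¹ • sym₀ + (3λ₁ + 2μ₁)⁻¹ • ℙ) ι`; the Schur complement then reduces to
scalar identities, one per coefficient, and its quadratic form is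
`a ‖sym₀ τ‖² + b ‖skew τ‖² + c ‖ℙ τ‖²`.
-/

noncomputable section

open Matrix

/-- The space of real `3 × 3` matrices. -/
abbrev M3 : Type := Matrix (Fin 3) (Fin 3) ℝ

/-- The Frobenius inner product `⟨σ, τ⟩ = trace (σᵀ * τ)` on `M3`. -/
def finner (σ τ : M3) : ℝ := (σᵀ * τ).trace

/-- The symmetric part map `sym τ = (τ + τᵀ)/2`. -/
def symM : M3 →ₗ[ℝ] M3 :=
  (2 : ℝ)⁻¹ • (LinearMap.id + (Matrix.transposeLinearEquiv (Fin 3) (Fin 3) ℝ ℝ).toLinearMap)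

/-- The skew-symmetric part map `skew τ = (τ - τᵀ)/2`. -/
def skewM : M3 →ₗ[ℝ] M3 :=
  (2 : ℝ)⁻¹ • (LinearMap.id - (Matrix.transposeLinearEquiv (Fin 3) (Fin 3) ℝ ℝ).toLinearMap)

/-- The volumetric (pressure) part `ℙ τ = (trace τ / 3) • I`. -/
def volP : M3 →ₗ[ℝ] M3 :=
  (Matrix.traceLinearMap (Fin 3) ℝ ℝ).smulRight ((3 : ℝ)⁻¹ • (1 : M3))

/-- The trace-free symmetric part `sym₀ = sym - ℙ`. -/
def sym0 : M3 →ₗ[ℝ] M3 := symM - volP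
/-- The subspace of symmetric matrices, `τᵀ = τ`, i.e. `τᵀ - τ = 0`. -/
def SymSub : Submodule ℝ M3 :=
  LinearMap.ker ((Matrix.transposeLinearEquiv (Fin 3) (Fin 3) ℝ ℝ).toLinearMap - LinearMap.id)

/-- The adjoint `ι*` of the inclusion `ι : Sym → M3`, i.e. `sym` with codomain `Sym`. -/
def symInto : M3 →ₗ[ℝ] SymSub :=
  LinearMap.codRestrict SymSub symM (fun c => by
    have h : (symM c)ᵀ = symM c := by
      simp [symM, Matrix.transpose_add, Matrix.transpose_smul, add_comm]
    simp [SymSub, LinearMap.mem_ker, h])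

/-- The operator
`ι C₀ ι* + G₀* ι* + ι G₀ + C₁ − (ι G₀ ι + C₁ ι)(ι* C₁ ι)⁻¹(ι* G₀* ι* + ι* C₁)`
of statement 18, where `C₀ = ι*(2μ₀·sym₀ + (3λ₀+2μ₀)·ℙ)ι`,
`G₀ = ι*(2ω₀·sym₀ + (3β₀+2ω₀)·ℙ)`, `C₁ = 2μ₁·sym₀ + 2α₁·skew + (3λ₁+2μ₁)·ℙ`,
`G₀star` is the adjoint of `G₀` and `Cinv` the inverse of `ι* C₁ ι`. -/
def bigOp (μ₀ lam₀ ω₀ β₀ μ₁ α₁ lam₁ : ℝ) (G₀star : SymSub →ₗ[ℝ] M3)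
    (Cinv : SymSub →ₗ[ℝ] SymSub) : M3 →ₗ[ℝ] M3 :=
  SymSub.subtype ∘ₗ
      (symInto ∘ₗ ((2 * μ₀) • sym0 + (3 * lam₀ + 2 * μ₀) • volP) ∘ₗ SymSub.subtype) ∘ₗ
      symInto +
    G₀star ∘ₗ symInto +
    SymSub.subtype ∘ₗ (symInto ∘ₗ ((2 * ω₀) • sym0 + (3 * β₀ + 2 * ω₀) • volP)) +
    ((2 * μ₁) • sym0 + (2 * α₁) • skewM + (3 * lam₁ + 2 * μ₁) • volP) -
    (SymSub.subtype ∘ₗ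
        (symInto ∘ₗ ((2 * ω₀) • sym0 + (3 * β₀ + 2 * ω₀) • volP)) ∘ₗ SymSub.subtype +
      ((2 * μ₁) • sym0 + (2 * α₁) • skewM + (3 * lam₁ + 2 * μ₁) • volP) ∘ₗ
        SymSub.subtype) ∘ₗ
      Cinv ∘ₗ
      (symInto ∘ₗ G₀star ∘ₗ symInto +
        symInto ∘ₗ ((2 * μ₁) • sym0 + (2 * α₁) • skewM + (3 * lam₁ + 2 * μ₁) • volP))

lemma finner_comm (σ τ : M3) : finner σ τ = finner τ σ := by
  rw [finner, finner, ← trace_transpose, transpose_mul, transpose_transpose]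

lemma finner_add_right (σ τ₁ τ₂ : M3) : finner σ (τ₁ + τ₂) = finner σ τ₁ + finner σ τ₂ := by
  simp [finner, Matrix.mul_add]

lemma finner_sub_right (σ τ₁ τ₂ : M3) : finner σ (τ₁ - τ₂) = finner σ τ₁ - finner σ τ₂ := by
  simp [finner, Matrix.mul_sub]

lemma finner_smul_right (r : ℝ) (σ τ : M3) : finner σ (r • τ) = r * finner σ τ := by
  simp [finner]

lemma finner_transpose_right (σ τ : M3) : finner σ τᵀ = finner σᵀ τ := by
  simp [finner]

lemma finner_one_right (σ : M3) : finner σ 1 = σ.trace := by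
  simp [finner]

lemma finner_self_nonneg (τ : M3) : 0 ≤ finner τ τ := by
  simpa [finner, conjTranspose_eq_transpose_of_trivial] using
    (posSemidef_conjTranspose_mul_self τ).trace_nonneg

lemma finner_self_pos {τ : M3} (hτ : τ ≠ 0) : 0 < finner τ τ := by
  refine (finner_self_nonneg τ).lt_of_ne' ?_
  simpa [finner, conjTranspose_eq_transpose_of_trivial] using
    (trace_conjTranspose_mul_self_eq_zero_iff (A := τ)).not.mpr hτ

lemma eq_of_forall_finner_eq {y z : M3} (h : ∀ x, finner x y = finner x z) : y = z := by
  by_contra hyz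
  have := finner_self_pos (sub_ne_zero.mpr hyz)
  rw [finner_sub_right, h, sub_self] at this
  exact lt_irrefl 0 this

def IsFinnerSymmetric (A : M3 →ₗ[ℝ] M3) : Prop :=
  ∀ σ τ, finner (A σ) τ = finner σ (A τ)

namespace IsFinnerSymmetric

variable {A B : M3 →ₗ[ℝ] M3}

lemma add (hA : IsFinnerSymmetric A) (hB : IsFinnerSymmetric B) : IsFinnerSymmetric (A + B) :=
  fun σ τ => by
    rw [LinearMap.add_apply, LinearMap.add_apply, finner_comm, finner_add_right,
      finner_add_right, finner_comm τ, finner_comm τ, hA, hB]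

lemma sub (hA : IsFinnerSymmetric A) (hB : IsFinnerSymmetric B) : IsFinnerSymmetric (A - B) :=
  fun σ τ => by
    rw [LinearMap.sub_apply, LinearMap.sub_apply, finner_comm, finner_sub_right,
      finner_sub_right, finner_comm τ, finner_comm τ, hA, hB]

lemma smul (r : ℝ) (hA : IsFinnerSymmetric A) : IsFinnerSymmetric (r • A) :=
  fun σ τ => by
    rw [LinearMap.smul_apply, LinearMap.smul_apply, finner_comm, finner_smul_right,
      finner_smul_right, finner_comm τ, hA]

lemma finner_apply_right_eq (hA : IsFinnerSymmetric A) (hAA : A ∘ₗ A = A) (τ : M3) :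
    finner τ (A τ) = finner (A τ) (A τ) := by
  rw [hA, ← LinearMap.comp_apply, hAA]

end IsFinnerSymmetric

lemma symM_apply (τ : M3) : symM τ = (2 : ℝ)⁻¹ • (τ + τᵀ) := by
  simp [symM, smul_add]

lemma skewM_apply (τ : M3) : skewM τ = (2 : ℝ)⁻¹ • (τ - τᵀ) := by
  simp [skewM, smul_sub]

lemma volP_apply (τ : M3) : volP τ = ((3 : ℝ)⁻¹ * τ.trace) • (1 : M3) := by
  simp [volP, smul_smul, mul_comm]

lemma isFinnerSymmetric_symM : IsFinnerSymmetric symM := fun σ τ => by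
  rw [symM_apply, symM_apply, finner_comm, finner_smul_right, finner_smul_right,
    finner_add_right, finner_add_right, finner_transpose_right, finner_comm τᵀ,
    finner_transpose_right, finner_comm]

lemma isFinnerSymmetric_skewM : IsFinnerSymmetric skewM := fun σ τ => by
  rw [skewM_apply, skewM_apply, finner_comm, finner_smul_right, finner_smul_right,
    finner_sub_right, finner_sub_right, finner_transpose_right, finner_comm τᵀ,
    finner_transpose_right, finner_comm]

lemma isFinnerSymmetric_volP : IsFinnerSymmetric volP := fun σ τ => by
  rw [volP_apply, volP_apply, finner_comm, finner_smul_right, finner_smul_right,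
    finner_one_right, finner_one_right]
  ring

lemma isFinnerSymmetric_sym0 : IsFinnerSymmetric sym0 :=
  isFinnerSymmetric_symM.sub isFinnerSymmetric_volP

def isotropicOp (a b c : ℝ) : M3 →ₗ[ℝ] M3 := a • sym0 + b • skewM + c • volP

lemma isotropicOp_apply (a b c : ℝ) (τ : M3) :
    isotropicOp a b c τ = (a / 2) • (τ + τᵀ) + (b / 2) • (τ - τᵀ) +
      ((c - a) / 3 * τ.trace) • (1 : M3) := by
  simp only [isotropicOp, sym0, LinearMap.add_apply, LinearMap.sub_apply, LinearMap.smul_apply,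
    symM_apply, skewM_apply, volP_apply]
  module

lemma isotropicOp_comp_isotropicOp (a b c a' b' c' : ℝ) :
    isotropicOp a b c ∘ₗ isotropicOp a' b' c' = isotropicOp (a * a') (b * b') (c * c') := by
  ext1 τ
  simp only [LinearMap.comp_apply, isotropicOp_apply, transpose_add, transpose_sub,
    transpose_smul, transpose_transpose, transpose_one, trace_add, trace_sub, trace_smul,
    trace_transpose, trace_one, Fintype.card_fin, smul_eq_mul]
  module

lemma isotropicOp_add_isotropicOp (a b c a' b' c' : ℝ) :
    isotropicOp a b c + isotropicOp a' b' c' = isotropicOp (a + a') (b + b') (c + c') := by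
  simp only [isotropicOp]
  module

lemma isotropicOp_sub_isotropicOp (a b c a' b' c' : ℝ) :
    isotropicOp a b c - isotropicOp a' b' c' = isotropicOp (a - a') (b - b') (c - c') := by
  simp only [isotropicOp]
  module

lemma isotropicOp_comp_isotropicOp_assoc {E : Type*} [AddCommGroup E] [Module ℝ E]
    (a b c a' b' c' : ℝ) (f : E →ₗ[ℝ] M3) :
    isotropicOp a b c ∘ₗ (isotropicOp a' b' c' ∘ₗ f) =
      isotropicOp (a * a') (b * b') (c * c') ∘ₗ f := by
  rw [← LinearMap.comp_assoc, isotropicOp_comp_isotropicOp]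

lemma smul_sym0_add_smul_skewM_add_smul_volP (a b c : ℝ) :
    a • sym0 + b • skewM + c • volP = isotropicOp a b c := rfl

lemma smul_sym0_add_smul_volP (a c : ℝ) : a • sym0 + c • volP = isotropicOp a 0 c := by
  simp [isotropicOp]

lemma symM_eq_isotropicOp : symM = isotropicOp 1 0 1 := by
  simp [isotropicOp, sym0]

lemma isotropicOp_one_one_one : isotropicOp 1 1 1 = LinearMap.id := by
  ext1 τ
  rw [isotropicOp_apply]
  module

lemma sym0_comp_sym0 : sym0 ∘ₗ sym0 = sym0 := by
  simpa [isotropicOp] using isotropicOp_comp_isotropicOp 1 0 0 1 0 0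

lemma skewM_comp_skewM : skewM ∘ₗ skewM = skewM := by
  simpa [isotropicOp] using isotropicOp_comp_isotropicOp 0 1 0 0 1 0

lemma volP_comp_volP : volP ∘ₗ volP = volP := by
  simpa [isotropicOp] using isotropicOp_comp_isotropicOp 0 0 1 0 0 1

lemma finner_isotropicOp_pos {a b c : ℝ} (ha : 0 < a) (hb : 0 < b) (hc : 0 < c) {τ : M3}
    (hτ : τ ≠ 0) : 0 < finner τ (isotropicOp a b c τ) := by
  have hdecomp : finner τ (isotropicOp a b c τ) =
      a * finner (sym0 τ) (sym0 τ) + b * finner (skewM τ) (skewM τ) +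
        c * finner (volP τ) (volP τ) := by
    rw [← isFinnerSymmetric_sym0.finner_apply_right_eq sym0_comp_sym0,
      ← isFinnerSymmetric_skewM.finner_apply_right_eq skewM_comp_skewM,
      ← isFinnerSymmetric_volP.finner_apply_right_eq volP_comp_volP]
    simp only [isotropicOp, LinearMap.add_apply, LinearMap.smul_apply, finner_add_right,
      finner_smul_right]
  have hparts : sym0 τ ≠ 0 ∨ skewM τ ≠ 0 ∨ volP τ ≠ 0 := by
    by_contra! h
    apply hτ
    simpa [isotropicOp, h.1, h.2.1, h.2.2] using
      (LinearMap.congr_fun isotropicOp_one_one_one τ).symm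
  have hsym0 := mul_nonneg ha.le (finner_self_nonneg (sym0 τ))
  have hskew := mul_nonneg hb.le (finner_self_nonneg (skewM τ))
  have hvol := mul_nonneg hc.le (finner_self_nonneg (volP τ))
  rw [hdecomp]
  rcases hparts with h | h | h
  · linarith [mul_pos ha (finner_self_pos h)]
  · linarith [mul_pos hb (finner_self_pos h)]
  · linarith [mul_pos hc (finner_self_pos h)]

lemma subtype_comp_symInto : SymSub.subtype ∘ₗ symInto = symM :=
  LinearMap.subtype_comp_codRestrict _ _ _

lemma subtype_comp_symInto_comp {E : Type*} [AddCommGroup E] [Module ℝ E] (f : E →ₗ[ℝ] M3) :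
    SymSub.subtype ∘ₗ (symInto ∘ₗ f) = symM ∘ₗ f := by
  rw [← LinearMap.comp_assoc, subtype_comp_symInto]

lemma coe_symInto (τ : M3) : (symInto τ : M3) = symM τ := rfl

lemma symM_coe (s : SymSub) : symM (s : M3) = s := by
  have hs : (s : M3)ᵀ = s := sub_eq_zero.mp s.2
  rw [symM_apply, hs, ← two_smul ℝ (s : M3), smul_smul, inv_mul_cancel₀ two_ne_zero, one_smul]

lemma symM_comp_subtype : symM ∘ₗ SymSub.subtype = SymSub.subtype :=
  LinearMap.ext symM_coe

lemma symInto_comp_subtype : symInto ∘ₗ SymSub.subtype = LinearMap.id :=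
  LinearMap.ext fun s => Subtype.ext (symM_coe s)

lemma eq_comp_subtype_of_finner_symInto {A : M3 →ₗ[ℝ] M3} (hA : IsFinnerSymmetric A)
    {F : SymSub →ₗ[ℝ] M3} (hF : ∀ (x : M3) (s : SymSub), finner (symInto (A x) : M3) s =
      finner x (F s)) :
    F = A ∘ₗ SymSub.subtype := by
  ext1 s
  refine eq_of_forall_finner_eq fun x => ?_
  rw [← hF, coe_symInto, isFinnerSymmetric_symM, symM_coe, hA]
  rfl

lemma eq_symInto_comp_isotropicOp_inv {a b c : ℝ} (ha : a ≠ 0) (hc : c ≠ 0)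
    {L : SymSub →ₗ[ℝ] SymSub}
    (hL : L ∘ₗ (symInto ∘ₗ isotropicOp a b c ∘ₗ SymSub.subtype) = LinearMap.id) :
    L = symInto ∘ₗ isotropicOp a⁻¹ 0 c⁻¹ ∘ₗ SymSub.subtype := by
  refine left_inv_eq_right_inv hL ?_
  rw [Module.End.mul_eq_comp, Module.End.one_eq_id]
  simp only [LinearMap.comp_assoc, subtype_comp_symInto_comp, symM_eq_isotropicOp,
    isotropicOp_comp_isotropicOp_assoc]
  rw [one_mul, one_mul, mul_inv_cancel₀ ha, mul_inv_cancel₀ hc, mul_zero, mul_zero,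
    ← symM_eq_isotropicOp, symM_comp_subtype, symInto_comp_subtype]

lemma bigOp_eq_isotropicOp (μ₀ lam₀ ω₀ β₀ μ₁ α₁ lam₁ : ℝ) (hμ₁ : μ₁ ≠ 0)
    (hκ₁ : 3 * lam₁ + 2 * μ₁ ≠ 0) :
    bigOp μ₀ lam₀ ω₀ β₀ μ₁ α₁ lam₁
        (isotropicOp (2 * ω₀) 0 (3 * β₀ + 2 * ω₀) ∘ₗ SymSub.subtype)
        (symInto ∘ₗ isotropicOp (2 * μ₁)⁻¹ 0 (3 * lam₁ + 2 * μ₁)⁻¹ ∘ₗ SymSub.subtype) =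
      isotropicOp (2 * ((μ₀ * μ₁ - ω₀ ^ 2) / μ₁)) (2 * α₁)
        (((3 * lam₁ + 2 * μ₁) * (3 * lam₀ + 2 * μ₀) - (3 * β₀ + 2 * ω₀) ^ 2) /
          (3 * lam₁ + 2 * μ₁)) := by
  simp only [bigOp, smul_sym0_add_smul_skewM_add_smul_volP, smul_sym0_add_smul_volP]
  simp only [LinearMap.comp_assoc, LinearMap.add_comp, LinearMap.comp_add, subtype_comp_symInto,
    subtype_comp_symInto_comp, symM_eq_isotropicOp, isotropicOp_comp_isotropicOp,
    isotropicOp_comp_isotropicOp_assoc, isotropicOp_add_isotropicOp, isotropicOp_sub_isotropicOp]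
  congr 1 <;> field_simp <;> ring

theorem micromorphic_schur_formula_general (μ₀ lam₀ ω₀ β₀ μ₁ α₁ lam₁ : ℝ)
    (hμ₁ : 0 < μ₁) (hlam₁ : 0 < lam₁ + (2 / 3) * μ₁)
    (G₀star : SymSub →ₗ[ℝ] M3)
    (hG₀star : ∀ (x : M3) (s : SymSub),
      finner ((symInto ∘ₗ ((2 * ω₀) • sym0 + (3 * β₀ + 2 * ω₀) • volP)) x : M3) (s : M3) =
        finner x (G₀star s))
    (Cinv : SymSub →ₗ[ℝ] SymSub)
    (hCinv₂ : Cinv ∘ₗ (symInto ∘ₗ ((2 * μ₁) • sym0 + (2 * α₁) • skewM +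
        (3 * lam₁ + 2 * μ₁) • volP) ∘ₗ SymSub.subtype) = LinearMap.id) :
    bigOp μ₀ lam₀ ω₀ β₀ μ₁ α₁ lam₁ G₀star Cinv =
        (2 * ((μ₀ * μ₁ - ω₀ ^ 2) / μ₁)) • sym0 + (2 * α₁) • skewM +
          (((3 * lam₁ + 2 * μ₁) * (3 * lam₀ + 2 * μ₀) - (3 * β₀ + 2 * ω₀) ^ 2) /
              (3 * lam₁ + 2 * μ₁)) • volP ∧
      ((0 < α₁ ∧ 0 < μ₀ * μ₁ - ω₀ ^ 2 ∧
          0 < (3 * lam₁ + 2 * μ₁) * (3 * lam₀ + 2 * μ₀) - (3 * β₀ + 2 * ω₀) ^ 2) →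
        ∀ τ : M3, τ ≠ 0 → 0 < finner τ (bigOp μ₀ lam₀ ω₀ β₀ μ₁ α₁ lam₁ G₀star Cinv τ)) := by
  have hκ₁ : 0 < 3 * lam₁ + 2 * μ₁ := by linarith
  have hG : G₀star = isotropicOp (2 * ω₀) 0 (3 * β₀ + 2 * ω₀) ∘ₗ SymSub.subtype := by
    rw [← smul_sym0_add_smul_volP]
    exact eq_comp_subtype_of_finner_symInto
      ((isFinnerSymmetric_sym0.smul _).add (isFinnerSymmetric_volP.smul _)) hG₀star
  have hC : Cinv = symInto ∘ₗ isotropicOp (2 * μ₁)⁻¹ 0 (3 * lam₁ + 2 * μ₁)⁻¹ ∘ₗ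
      SymSub.subtype :=
    eq_symInto_comp_isotropicOp_inv (by positivity) hκ₁.ne' hCinv₂
  have hformula := bigOp_eq_isotropicOp μ₀ lam₀ ω₀ β₀ μ₁ α₁ lam₁ hμ₁.ne' hκ₁.ne'
  rw [← hG, ← hC] at hformula
  refine ⟨hformula, fun ⟨hα₁, hshear, hbulk⟩ τ hτ => ?_⟩
  rw [hformula]
  exact finner_isotropicOp_pos (by positivity) (by positivity) (by positivity) hτ

/-- The Schur-type operator of the micromorphic model equals the
stated isotropic expression, and is strictly positive definite provided `α₁ > 0`,
`μ₀μ₁ − ω₀² > 0` and `(3λ₁+2μ₁)(3λ₀+2μ₀) − (3β₀+2ω₀)² > 0`. -/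
theorem micromorphic_schur_formula (μ₀ lam₀ ω₀ β₀ μ₁ α₁ lam₁ : ℝ)
    (hμ₁ : 0 < μ₁) (hlam₁ : 0 < lam₁ + (2 / 3) * μ₁)
    (G₀star : SymSub →ₗ[ℝ] M3)
    (hG₀star : ∀ (x : M3) (s : SymSub),
      finner ((symInto ∘ₗ ((2 * ω₀) • sym0 + (3 * β₀ + 2 * ω₀) • volP)) x : M3) (s : M3) =
        finner x (G₀star s))
    (Cinv : SymSub →ₗ[ℝ] SymSub)
    (hCinv₁ : (symInto ∘ₗ ((2 * μ₁) • sym0 + (2 * α₁) • skewM +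
        (3 * lam₁ + 2 * μ₁) • volP) ∘ₗ SymSub.subtype) ∘ₗ Cinv = LinearMap.id)
    (hCinv₂ : Cinv ∘ₗ (symInto ∘ₗ ((2 * μ₁) • sym0 + (2 * α₁) • skewM +
        (3 * lam₁ + 2 * μ₁) • volP) ∘ₗ SymSub.subtype) = LinearMap.id) :
    bigOp μ₀ lam₀ ω₀ β₀ μ₁ α₁ lam₁ G₀star Cinv =
        (2 * ((μ₀ * μ₁ - ω₀ ^ 2) / μ₁)) • sym0 + (2 * α₁) • skewM +
          (((3 * lam₁ + 2 * μ₁) * (3 * lam₀ + 2 * μ₀) - (3 * β₀ + 2 * ω₀) ^ 2) /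
              (3 * lam₁ + 2 * μ₁)) • volP ∧
      ((0 < α₁ ∧ 0 < μ₀ * μ₁ - ω₀ ^ 2 ∧
          0 < (3 * lam₁ + 2 * μ₁) * (3 * lam₀ + 2 * μ₀) - (3 * β₀ + 2 * ω₀) ^ 2) →
        ∀ τ : M3, τ ≠ 0 → 0 < finner τ (bigOp μ₀ lam₀ ω₀ β₀ μ₁ α₁ lam₁ G₀star Cinv τ)) :=
  micromorphic_schur_formula_general μ₀ lam₀ ω₀ β₀ μ₁ α₁ lam₁ hμ₁ hlam₁ G₀star hG₀star Cinv hCinv₂
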